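/- arXiv:0705.0930 — 2 statements merged into one kernel-verified Lean document; each statement's English description precedes it below -/
import Mathlib

section
/- Let M be a module over a commutative ring R and f : M → M an R-linear endomorphism. The evaluation map ev : PolynomialModule R M → M defined by ev(Σ mₙ tⁿ) = Σ fⁿ(mₙ) is surjective, and its kernel equals the image of the map (t − f) : PolynomialModule R M → PolynomialModule R M sending Σ mₙ tⁿ to Σ mₙ tⁿ⁺¹ − Σ f(mₙ) tⁿ. -/
open Polynomial PolynomialModule

/-!
Modulo the range of `t - f` one has `m tⁿ⁺¹ ≡ f(m) tⁿ`, so by induction `m tⁿ ≡ fⁿ(m)` and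
every `p` is congruent to the constant `ev p`. Conversely `ev` kills `t - f`, because
`ev (m tⁿ⁺¹) = fⁿ(f m) = ev (f(m) tⁿ)`. Hence `ker ev = range (t - f)`, and `ev` is surjective
since it is the identity on constants.
-/

/-- The map `t - f` on `PolynomialModule R M`, sending `Σ mₙ tⁿ` to
`Σ mₙ tⁿ⁺¹ − Σ f(mₙ) tⁿ`. -/
noncomputable def tSubF {R M : Type*} [CommRing R] [AddCommGroup M] [Module R M]
    (f : M →ₗ[R] M) : PolynomialModule R M →ₗ[R] PolynomialModule R M where
  toFun p := (X : R[X]) • p - PolynomialModule.map R f p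
  map_add' p q := by simp [smul_add]; abel
  map_smul' r p := by simp [smul_comm r, smul_sub]

/-- The evaluation map `Σ mₙ tⁿ ↦ Σ fⁿ(mₙ)`. -/
noncomputable def evalF {R M : Type*} [CommRing R] [AddCommGroup M] [Module R M]
    (f : M →ₗ[R] M) (p : PolynomialModule R M) : M :=
  Finsupp.sum (show ℕ →₀ M from p.coeff) fun n m => (f ^ n) m

section

variable {R M : Type*} [CommRing R] [AddCommGroup M] [Module R M] (f : M →ₗ[R] M)

noncomputable def evalFLinearMap : PolynomialModule R M →ₗ[R] M :=
  Finsupp.lsum R (fun n => f ^ n) ∘ₗ (coeffLinearEquiv R R).toLinearMap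

theorem evalFLinearMap_apply (p : PolynomialModule R M) : evalFLinearMap f p = evalF f p := rfl

@[simp]
theorem evalF_single (n : ℕ) (m : M) : evalF f (single R n m) = (f ^ n) m :=
  Finsupp.sum_single_index (map_zero _)

theorem tSubF_single (n : ℕ) (m : M) :
    tSubF f (single R n m) = single R (n + 1) m - single R n (f m) := by
  change (X : R[X]) • single R n m - map R f (single R n m) = _
  rw [map_single, ← monomial_one_one_eq_X, monomial_smul_single, one_smul, add_comm]

theorem evalFLinearMap_comp_tSubF : evalFLinearMap f ∘ₗ tSubF f = 0 := by
  ext n m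
  change evalFLinearMap f (tSubF f (single R n m)) = 0
  rw [tSubF_single, map_sub, evalFLinearMap_apply, evalFLinearMap_apply, evalF_single,
    evalF_single, pow_succ, Module.End.mul_apply, sub_self]

theorem single_sub_single_zero_pow_mem_range_tSubF (n : ℕ) (m : M) :
    single R n m - single R 0 ((f ^ n) m) ∈ LinearMap.range (tSubF f) := by
  induction n generalizing m with
  | zero => simp
  | succ n ih =>
    have hstep : single R (n + 1) m - single R n (f m) ∈ LinearMap.range (tSubF f) :=
      ⟨single R n m, tSubF_single f n m⟩
    rw [pow_succ, Module.End.mul_apply]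
    simpa using add_mem hstep (ih (f m))

theorem sub_single_zero_evalF_mem_range_tSubF (p : PolynomialModule R M) :
    p - single R 0 (evalF f p) ∈ LinearMap.range (tSubF f) := by
  let g := LinearMap.id - lsingle R 0 ∘ₗ evalFLinearMap f
  change g p ∈ _
  induction p using induction_linear with
  | zero => simp
  | add p q hp hq => simpa using add_mem hp hq
  | single n m => simpa [g, evalFLinearMap_apply, lsingle] using
      single_sub_single_zero_pow_mem_range_tSubF f n m

end

theorem evalF_surjective_and_ker_eq_range_tSubF
    {R M : Type*} [CommRing R] [AddCommGroup M] [Module R M] (f : M →ₗ[R] M) :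
    Function.Surjective (evalF f) ∧
      {p : PolynomialModule R M | evalF f p = 0} = Set.range (tSubF f) := by
  refine ⟨fun m => ⟨single R 0 m, by simp⟩, Set.ext fun p => ⟨fun hp => ?_, ?_⟩⟩
  · obtain ⟨q, hq⟩ := sub_single_zero_evalF_mem_range_tSubF f p
    exact ⟨q, by rw [hq, hp, single_zero, sub_zero]⟩
  · rintro ⟨q, rfl⟩
    exact LinearMap.congr_fun (evalFLinearMap_comp_tSubF f) q
end

section
/- Let M be an R-module and f : M → M an R-linear endomorphism. The map (t − f) : PolynomialModule R M → PolynomialModule R M, sending Σ mₙ tⁿ to Σ mₙ tⁿ⁺¹ − Σ f(mₙ) tⁿ, is injective. -/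
open Polynomial PolynomialModule

/-!
If `p ≠ 0` has top coefficient in degree `N`, then the coefficient of `tSubF f p` in degree
`N + 1` is `p_N - f p_{N+1} = p_N ≠ 0`: the shift raises the degree while `f` does not.
-/

theorem Finsupp.exists_ne_zero_and_succ_eq_zero {M : Type*} [Zero M] {g : ℕ →₀ M} (hg : g ≠ 0) :
    ∃ N, g N ≠ 0 ∧ g (N + 1) = 0 := by
  obtain ⟨N, hN, hmax⟩ :=
    g.support.exists_max_image id (Finsupp.support_nonempty_iff.mpr hg)
  refine ⟨N, Finsupp.mem_support_iff.mp hN, Finsupp.notMem_support_iff.mp fun hN1 => ?_⟩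
  exact (hmax _ hN1).not_gt N.lt_succ_self

namespace PolynomialModule

variable {R M : Type*} [CommRing R] [AddCommGroup M] [Module R M]

theorem coeff_sub (p q : PolynomialModule R M) : (p - q).coeff = p.coeff - q.coeff := rfl

theorem coeff_X_smul_succ (p : PolynomialModule R M) (n : ℕ) :
    ((X : R[X]) • p).coeff (n + 1) = p.coeff n := by
  simp [← monomial_one_one_eq_X, monomial_smul_apply]

theorem coeff_map {M' : Type*} [AddCommGroup M'] [Module R M'] (f : M →ₗ[R] M')
    (p : PolynomialModule R M) (n : ℕ) : (map R f p).coeff n = f (p.coeff n) := rfl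

end PolynomialModule

theorem tSubF_coeff_succ {R M : Type*} [CommRing R] [AddCommGroup M] [Module R M]
    (f : M →ₗ[R] M) (p : PolynomialModule R M) (n : ℕ) :
    (tSubF f p).coeff (n + 1) = p.coeff n - f (p.coeff (n + 1)) := by
  simp only [tSubF, LinearMap.coe_mk, AddHom.coe_mk, PolynomialModule.coeff_sub,
    Finsupp.sub_apply, coeff_X_smul_succ, PolynomialModule.coeff_map]

theorem tSubF_injective {R M : Type*} [CommRing R] [AddCommGroup M] [Module R M]
    (f : M →ₗ[R] M) : Function.Injective (tSubF f) := by
  rw [injective_iff_map_eq_zero]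
  intro p hp
  by_contra hne
  obtain ⟨N, hN, hN1⟩ := Finsupp.exists_ne_zero_and_succ_eq_zero (coeff_eq_zero.not.mpr hne)
  have hcoeff := tSubF_coeff_succ f p N
  rw [hp, hN1, map_zero, sub_zero] at hcoeff
  exact hN hcoeff.symm
end
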